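/- arXiv:math/9904165 — 3 statements merged into one kernel-verified Lean document; each statement's English description precedes it below -/
import Mathlib

section
/- Let X be an n-dimensional Banach lattice on ℝⁿ with 2-concavity constant M_(2)(X) = 1, and let λ ∈ ℝⁿ. Then the operator norm of the diagonal operator D_λ : ℓ₂ⁿ → X (given coordinatewise by (D_λ x)_k = λ_k x_k) equals ‖λ‖_{(((X')²)')^{1/2}}, i.e. ‖D_λ‖ = ‖ |λ|² ‖_{((X')²)'}^{1/2}, where X' is the dual lattice, Y² denotes the 2nd power of a lattice Y (‖y‖_{Y²} = ‖|y|^{1/2}‖_Y²), and Z^{1/2} denotes the 1/2-power (‖z‖_{Z^{1/2}} = ‖|z|²‖_Z^{1/2}). -/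
open Complex MeasureTheory Finset

noncomputable section

namespace Paper

/-- The closed unit strip in the complex plane. -/
def Strip : Set ℂ := {z : ℂ | 0 ≤ z.re ∧ z.re ≤ 1}

/-- The open unit strip in the complex plane. -/
def OStrip : Set ℂ := {z : ℂ | 0 < z.re ∧ z.re < 1}

/-- `N` is a norm on the complex vector space `V`. -/
def IsNormC {V : Type*} [AddCommGroup V] [Module ℂ V] (N : V → ℝ) : Prop :=
  (∀ x, 0 ≤ N x) ∧ (∀ x, N x = 0 → x = 0) ∧
  (∀ (c : ℂ) (x), N (c • x) = ‖c‖ * N x) ∧ (∀ x y, N (x + y) ≤ N x + N y)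

/-- `N` is a lattice norm on `ℝⁿ`. -/
def IsLatticeNorm {n : ℕ} (N : (Fin n → ℝ) → ℝ) : Prop :=
  (∀ x, 0 ≤ N x) ∧ (∀ x, N x = 0 → x = 0) ∧
  (∀ (c : ℝ) (x), N (c • x) = |c| * N x) ∧ (∀ x y, N (x + y) ≤ N x + N y) ∧
  (∀ x y, (∀ i, |x i| ≤ |y i|) → N x ≤ N y)

/-- The `r`-th power `X^r` of a lattice norm: `‖x‖_{X^r} = ‖ |x|^{1/r} ‖_X^r`. -/
def powNorm {n : ℕ} (r : ℝ) (N : (Fin n → ℝ) → ℝ) (x : Fin n → ℝ) : ℝ :=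
  (N fun i => |x i| ^ (1 / r)) ^ r

/-- `N` is `p`-convex with constant `C`. -/
def ConvexWith {n : ℕ} (p C : ℝ) (N : (Fin n → ℝ) → ℝ) : Prop :=
  ∀ (m : ℕ) (x : Fin m → Fin n → ℝ),
    N (fun j => (∑ i, |x i j| ^ p) ^ (1 / p)) ≤ C * (∑ i, N (x i) ^ p) ^ (1 / p)

/-- `N` is `p`-concave with constant `C`. -/
def ConcaveWith {n : ℕ} (p C : ℝ) (N : (Fin n → ℝ) → ℝ) : Prop :=
  ∀ (m : ℕ) (x : Fin m → Fin n → ℝ),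
    (∑ i, N (x i) ^ p) ^ (1 / p) ≤ C * N (fun j => (∑ i, |x i j| ^ p) ^ (1 / p))

/-- The dual lattice norm on `ℝⁿ`. -/
def dualNR {n : ℕ} (N : (Fin n → ℝ) → ℝ) (y : Fin n → ℝ) : ℝ :=
  sSup {r : ℝ | ∃ x, N x ≤ 1 ∧ r = |∑ i, x i * y i|}

/-- The Calderón product norm `X₀^{1-θ}X₁^θ` on `ℝⁿ`. -/
def calNorm {n : ℕ} (θ : ℝ) (N₀ N₁ : (Fin n → ℝ) → ℝ) (f : Fin n → ℝ) : ℝ :=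
  sInf {c : ℝ | ∃ g h : Fin n → ℝ, (∀ i, |f i| = |g i| ^ (1 - θ) * |h i| ^ θ) ∧
    c = N₀ g ^ (1 - θ) * N₁ h ^ θ}

/-- The complex interpolation norm `[N₀,N₁]_θ`, computed via analytic functions
of finite type `z ↦ ∑ φᵢ(z) • vᵢ` on the strip (which, by density, gives the
complex interpolation norm on the intersection for couples with dense intersection). -/
def interpN {D : Type*} [AddCommGroup D] [Module ℂ D]
    (θ : ℝ) (N₀ N₁ : D → ℝ) (x : D) : ℝ :=
  sInf {c : ℝ | ∃ (m : ℕ) (φ : Fin m → ℂ → ℂ) (v : Fin m → D),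
    (∀ i, ContinuousOn (φ i) Strip) ∧
    (∀ i, DifferentiableOn ℂ (φ i) OStrip) ∧
    (∀ i, ∃ B : ℝ, ∀ z ∈ Strip, ‖φ i z‖ ≤ B) ∧
    (∑ i, φ i (θ : ℂ) • v i) = x ∧
    (∀ t : ℝ, N₀ (∑ i, φ i (Complex.I * t) • v i) ≤ c) ∧
    (∀ t : ℝ, N₁ (∑ i, φ i (1 + Complex.I * t) • v i) ≤ c)}

/-- Operator "norm" of a map with respect to given norm functions. -/
def opN {X Y : Type*} (NX : X → ℝ) (NY : Y → ℝ) (T : X → Y) : ℝ :=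
  sSup {r : ℝ | ∃ x, NX x ≤ 1 ∧ r = NY (T x)}

/-- The Hilbert space `ℓ₂`. -/
abbrev Hilb := lp (fun _ : ℕ => ℂ) 2

def hilbNorm (x : Hilb) : ℝ := ‖x‖

/-- `d_θ[M₀,M₁]`: the norm of the identity
`L(ℓ₂,[M₀,M₁]_θ) → [L(ℓ₂,M₀),L(ℓ₂,M₁)]_θ`. -/
def dTheta {V : Type*} [NormedAddCommGroup V] [NormedSpace ℂ V]
    (θ : ℝ) (N₀ N₁ : V → ℝ) : ℝ :=
  sSup {r : ℝ | ∃ T : Hilb →L[ℂ] V,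
    opN hilbNorm (interpN θ N₀ N₁) ⇑T ≤ 1 ∧
    r = interpN θ (fun S : Hilb →L[ℂ] V => opN hilbNorm N₀ ⇑S)
        (fun S : Hilb →L[ℂ] V => opN hilbNorm N₁ ⇑S) T}

/-- Rademacher average `(2^{-m} ∑_ε ‖∑ ±xᵢ‖²)`. -/
def radAvg {V : Type*} [AddCommGroup V] (N : V → ℝ) {m : ℕ} (x : Fin m → V) : ℝ :=
  ((2 : ℝ) ^ m)⁻¹ * ∑ ε : Fin m → Bool, N (∑ i, if ε i then x i else -x i) ^ 2

/-- `N` has (Rademacher) type 2 with constant `C`. -/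
def Type2With {V : Type*} [AddCommGroup V] (N : V → ℝ) (C : ℝ) : Prop :=
  ∀ (m : ℕ) (x : Fin m → V), Real.sqrt (radAvg N x) ≤ C * Real.sqrt (∑ i, N (x i) ^ 2)

/-- `N` has (Rademacher) cotype 2 with constant `C`. -/
def Cotype2With {V : Type*} [AddCommGroup V] (N : V → ℝ) (C : ℝ) : Prop :=
  ∀ (m : ℕ) (x : Fin m → V), Real.sqrt (∑ i, N (x i) ^ 2) ≤ C * Real.sqrt (radAvg N x)

/-- The injective tensor norm of two norm functions. -/
def injN {V W : Type*} [AddCommGroup V] [Module ℂ V] [AddCommGroup W] [Module ℂ W]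
    (NV : V → ℝ) (NW : W → ℝ) (z : TensorProduct ℂ V W) : ℝ :=
  sSup {r : ℝ | ∃ (φ : V →ₗ[ℂ] ℂ) (ψ : W →ₗ[ℂ] ℂ),
    (∀ x, ‖φ x‖ ≤ NV x) ∧ (∀ y, ‖ψ y‖ ≤ NW y) ∧
    r = ‖TensorProduct.lift (((LinearMap.mul ℂ ℂ).comp φ).compl₂ ψ) z‖}

/-- Dual norm on linear functionals. -/
def dualNC {V : Type*} [AddCommGroup V] [Module ℂ V] (N : V → ℝ) (φ : V →ₗ[ℂ] ℂ) : ℝ :=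
  sSup {r : ℝ | ∃ x, N x ≤ 1 ∧ r = ‖φ x‖}

/-- The space of bounded linear functionals (dual space of the completion). -/
def BddDual {V : Type*} [AddCommGroup V] [Module ℂ V] (N : V → ℝ) :
    Submodule ℂ (V →ₗ[ℂ] ℂ) where
  carrier := {φ | ∃ c : ℝ, ∀ x, ‖φ x‖ ≤ c * N x}
  zero_mem' := ⟨0, by simp⟩
  add_mem' := by
    rintro φ ψ ⟨c, hc⟩ ⟨d, hd⟩
    exact ⟨c + d, fun x => by
      have h1 := hc x; have h2 := hd x
      calc ‖(φ + ψ) x‖ = ‖φ x + ψ x‖ := by simp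
        _ ≤ ‖φ x‖ + ‖ψ x‖ := norm_add_le _ _
        _ ≤ (c + d) * N x := by rw [add_mul]; exact add_le_add h1 h2⟩
  smul_mem' := by
    rintro a φ ⟨c, hc⟩
    exact ⟨‖a‖ * c, fun x => by
      have : ‖(a • φ) x‖ = ‖a‖ * ‖φ x‖ := by simp [norm_smul]
      rw [this, mul_assoc]
      exact mul_le_mul_of_nonneg_left (hc x) (norm_nonneg a)⟩

/-- Strictly simple functions with values in `V`: the span of
`v`-valued indicators of finite-measure measurable sets. -/
def SimpleSub {Ω : Type*} [MeasurableSpace Ω] (μ : Measure Ω)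
    (V : Type*) [AddCommGroup V] [Module ℂ V] : Submodule ℂ (Ω → V) :=
  Submodule.span ℂ {f | ∃ (s : Set Ω) (v : V), MeasurableSet s ∧ μ s < ⊤ ∧
    f = s.indicator fun _ => v}

/-- A Banach function space over a measure `μ`, with `K`-valued functions. -/
structure BFS (Ω : Type*) [MeasurableSpace Ω] (μ : Measure Ω) (K : Type*) [RCLike K] where
  mem : (Ω → K) → Prop
  nrm : (Ω → K) → ℝ
  mem_zero : mem 0
  mem_add : ∀ f g, mem f → mem g → mem (f + g)
  mem_smul : ∀ (c : K) (f), mem f → mem (c • f)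
  mem_meas : ∀ f, mem f → AEStronglyMeasurable f μ
  ideal : ∀ f g, AEStronglyMeasurable f μ → mem g →
    (∀ᵐ ω ∂μ, ‖f ω‖ ≤ ‖g ω‖) → mem f ∧ nrm f ≤ nrm g
  nrm_nonneg : ∀ f, 0 ≤ nrm f
  nrm_eq_zero : ∀ f, mem f → nrm f = 0 → f =ᵐ[μ] 0
  nrm_add : ∀ f g, mem f → mem g → nrm (f + g) ≤ nrm f + nrm g
  nrm_smul : ∀ (c : K) (f), nrm (c • f) = ‖c‖ * nrm f
  mem_indicator : ∀ s : Set Ω, MeasurableSet s → μ s < ⊤ →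
    mem (s.indicator fun _ => 1)
  complete : ∀ f : ℕ → Ω → K, (∀ k, mem (f k)) →
    (∀ ε : ℝ, 0 < ε → ∃ N : ℕ, ∀ p q, N ≤ p → N ≤ q → nrm (f p - f q) < ε) →
    ∃ g, mem g ∧ ∀ ε : ℝ, 0 < ε → ∃ N : ℕ, ∀ p, N ≤ p → nrm (f p - g) < ε

variable {Ω : Type*} [MeasurableSpace Ω] {μ : Measure Ω} {K : Type*} [RCLike K]

/-- `X` is `r`-convex with constant `C`. -/
def BFS.RConvexWith (X : BFS Ω μ K) (r C : ℝ) : Prop :=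
  ∀ (m : ℕ) (f : Fin m → Ω → K), (∀ i, X.mem (f i)) →
    X.mem (fun ω => ((((∑ i, ‖f i ω‖ ^ r) ^ (1 / r) : ℝ) : K))) ∧
    X.nrm (fun ω => ((((∑ i, ‖f i ω‖ ^ r) ^ (1 / r) : ℝ) : K))) ≤
      C * (∑ i, X.nrm (f i) ^ r) ^ (1 / r)

/-- `X` is `r`-concave with constant `C`. -/
def BFS.RConcaveWith (X : BFS Ω μ K) (r C : ℝ) : Prop :=
  ∀ (m : ℕ) (f : Fin m → Ω → K), (∀ i, X.mem (f i)) →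
    (∑ i, X.nrm (f i) ^ r) ^ (1 / r) ≤
      C * X.nrm (fun ω => ((((∑ i, ‖f i ω‖ ^ r) ^ (1 / r) : ℝ) : K)))

/-!
Both sides equal `sup {(∑ λᵢ² gᵢ²)^{1/2} : ‖g‖_{X'} ≤ 1}`. For `‖D_λ‖`, write `‖λx‖_X` as a
supremum of pairings with the unit ball of `X'` (Hahn–Banach) and take the supremum over `x`
first: by Cauchy–Schwarz it is attained at `x ∥ λg`. On the other side, `μ` lies in the unit ball
of `(X')²` iff `g = |μ|^{1/2}` lies in that of `X'`, and `|∑ μᵢ λᵢ²| ≤ ∑ λᵢ² gᵢ²` with equality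
at `μ = g²`; solidity of the unit ball of `X'` lets one replace a norming `g` by `|g|`.
-/

lemma exists_sum_sq_le_one_sum_mul_eq_sqrt {ι : Type*} [Fintype ι] (w : ι → ℝ) :
    ∃ x : ι → ℝ, ∑ i, x i ^ 2 ≤ 1 ∧ ∑ i, x i * w i = √(∑ i, w i ^ 2) := by
  set s := √(∑ i, w i ^ 2)
  by_cases hs : s = 0
  · exact ⟨0, by simp, by simp [hs]⟩
  have hs2 : s ^ 2 = ∑ i, w i ^ 2 := Real.sq_sqrt (sum_nonneg fun i _ => sq_nonneg _)
  refine ⟨fun i => w i / s, le_of_eq ?_, ?_⟩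
  · simp only [div_pow, ← sum_div, ← hs2]
    exact div_self (pow_ne_zero 2 hs)
  · calc ∑ i, w i / s * w i = s ^ 2 / s := by
          rw [hs2, sum_div]
          exact sum_congr rfl fun i _ => by ring
      _ = s := by field_simp

lemma dualNR_le {n : ℕ} {N : (Fin n → ℝ) → ℝ} {y : Fin n → ℝ} {c : ℝ} (hc : 0 ≤ c)
    (h : ∀ x, N x ≤ 1 → |∑ i, x i * y i| ≤ c) : dualNR N y ≤ c :=
  Real.sSup_le (by rintro r ⟨x, hx, rfl⟩; exact h x hx) hc

lemma abs_sum_mul_le_dualNR_of_abs_le {n : ℕ} {N : (Fin n → ℝ) → ℝ} (C : Fin n → ℝ)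
    (hC : ∀ x, N x ≤ 1 → ∀ i, |x i| ≤ C i) {x : Fin n → ℝ} (hx : N x ≤ 1) (y : Fin n → ℝ) :
    |∑ i, x i * y i| ≤ dualNR N y := by
  refine le_csSup ⟨∑ i, C i * |y i|, ?_⟩ ⟨x, hx, rfl⟩
  rintro r ⟨z, hz, rfl⟩
  calc |∑ i, z i * y i| ≤ ∑ i, |z i| * |y i| := by
        simpa only [abs_mul] using abs_sum_le_sum_abs (fun i => z i * y i) univ
    _ ≤ ∑ i, C i * |y i| := by gcongr with i; exact hC z hz i

lemma powNorm_two_eq {n : ℕ} (M : (Fin n → ℝ) → ℝ) (μ : Fin n → ℝ) :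
    powNorm 2 M μ = M (fun i => √|μ i|) ^ 2 := by
  simp [powNorm, Real.sqrt_eq_rpow]

lemma apply_sqrt_abs_le_one_of_powNorm_two_le_one {n : ℕ} {M : (Fin n → ℝ) → ℝ}
    {μ : Fin n → ℝ} (hμ : powNorm 2 M μ ≤ 1) : M (fun i => √|μ i|) ≤ 1 := by
  rw [powNorm_two_eq, sq_le_one_iff_abs_le_one] at hμ
  exact (le_abs_self _).trans hμ

namespace IsLatticeNorm

variable {n : ℕ} {N : (Fin n → ℝ) → ℝ}

lemma nonneg (hN : IsLatticeNorm N) (x : Fin n → ℝ) : 0 ≤ N x := hN.1 x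

lemma map_smul (hN : IsLatticeNorm N) (c : ℝ) (x : Fin n → ℝ) : N (c • x) = |c| * N x :=
  hN.2.2.1 c x

lemma eq_zero_of_map_eq_zero (hN : IsLatticeNorm N) {x : Fin n → ℝ} (h : N x = 0) : x = 0 :=
  hN.2.1 x h

lemma map_add_le (hN : IsLatticeNorm N) (x y : Fin n → ℝ) : N (x + y) ≤ N x + N y :=
  hN.2.2.2.1 x y

lemma mono (hN : IsLatticeNorm N) {x y : Fin n → ℝ} (h : ∀ i, |x i| ≤ |y i|) : N x ≤ N y :=
  hN.2.2.2.2 x y h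

lemma map_zero (hN : IsLatticeNorm N) : N 0 = 0 := by
  simpa using hN.map_smul 0 0

lemma single_pos (hN : IsLatticeNorm N) (i : Fin n) : 0 < N (Pi.single i 1) := by
  refine (hN.nonneg _).lt_of_ne fun h => ?_
  simpa using congrFun (hN.eq_zero_of_map_eq_zero h.symm) i

lemma abs_apply_mul_le (hN : IsLatticeNorm N) (x : Fin n → ℝ) (i : Fin n) :
    |x i| * N (Pi.single i 1) ≤ N x := by
  rw [← hN.map_smul, ← Pi.single_smul, smul_eq_mul, mul_one]
  exact hN.mono fun j => by
    rcases eq_or_ne j i with rfl | h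
    · simp
    · simp [Pi.single_eq_of_ne h]

lemma abs_sum_mul_le_dualNR (hN : IsLatticeNorm N) {x : Fin n → ℝ} (hx : N x ≤ 1)
    (y : Fin n → ℝ) : |∑ i, x i * y i| ≤ dualNR N y :=
  abs_sum_mul_le_dualNR_of_abs_le (fun i => (N (Pi.single i 1))⁻¹)
    (fun z hz i => by
      rw [← one_div, le_div_iff₀ (hN.single_pos i)]
      exact (hN.abs_apply_mul_le z i).trans hz) hx y

lemma abs_sum_mul_le_mul_dualNR (hN : IsLatticeNorm N) (x y : Fin n → ℝ) :
    |∑ i, x i * y i| ≤ N x * dualNR N y := by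
  rcases (hN.nonneg x).eq_or_lt with hx | hx
  · simp [hN.eq_zero_of_map_eq_zero hx.symm, hN.map_zero]
  have hunit : N ((N x)⁻¹ • x) ≤ 1 := by
    rw [hN.map_smul, abs_of_pos (inv_pos.2 hx), inv_mul_cancel₀ hx.ne']
  have := hN.abs_sum_mul_le_dualNR hunit y
  simp only [Pi.smul_apply, smul_eq_mul, mul_assoc, ← mul_sum, abs_mul,
    abs_of_pos (inv_pos.2 hx)] at this
  rwa [inv_mul_le_iff₀ hx] at this

lemma dualNR_nonneg (hN : IsLatticeNorm N) (y : Fin n → ℝ) : 0 ≤ dualNR N y :=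
  (abs_nonneg _).trans (hN.abs_sum_mul_le_dualNR (x := 0) (by simp [hN.map_zero]) y)

lemma dualNR_abs_le (hN : IsLatticeNorm N) (y : Fin n → ℝ) :
    dualNR N (fun i => |y i|) ≤ dualNR N y := by
  refine dualNR_le (hN.dualNR_nonneg y) fun x hx => ?_
  set x' : Fin n → ℝ := fun i => if 0 ≤ y i then x i else -x i
  have hx' : N x' ≤ 1 := (hN.mono fun i => by simp only [x']; split_ifs <;> simp).trans hx
  have hsum : ∑ i, x i * |y i| = ∑ i, x' i * y i := sum_congr rfl fun i _ => by
    simp only [x']; split_ifs with h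
    · rw [abs_of_nonneg h]
    · rw [abs_of_neg (not_le.1 h)]; ring
  rw [hsum]
  exact hN.abs_sum_mul_le_dualNR hx' y

lemma exists_dualNR_le_one_sum_mul_eq (hN : IsLatticeNorm N) (v : Fin n → ℝ) :
    ∃ y : Fin n → ℝ, dualNR N y ≤ 1 ∧ ∑ i, v i * y i = N v := by
  rcases eq_or_ne v 0 with rfl | hv
  · exact ⟨0, dualNR_le zero_le_one fun x _ => by simp, by simp [hN.map_zero]⟩
  obtain ⟨g, hgv, hgN⟩ := exists_extension_of_le_sublinear
    (LinearPMap.mkSpanSingleton v (N v) hv) N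
    (fun c hc x => by rw [hN.map_smul, abs_of_pos hc])
    hN.map_add_le
    (by
      rintro ⟨w, hw⟩
      obtain ⟨t, rfl⟩ := Submodule.mem_span_singleton.1 hw
      rw [LinearPMap.mkSpanSingleton'_apply, smul_eq_mul, hN.map_smul]
      exact mul_le_mul_of_nonneg_right (le_abs_self t) (hN.nonneg v))
  have hg : ∀ x, g x = ∑ i, x i * g (Pi.single i 1) := fun x => by
    rw [g.pi_apply_eq_sum_univ x]
    refine sum_congr rfl fun i _ => ?_
    congr 2
    ext j
    simp [Pi.single_apply, eq_comm]
  refine ⟨fun i => g (Pi.single i 1), dualNR_le zero_le_one fun x hx => ?_, ?_⟩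
  · rw [← hg, abs_le]
    have hneg := hgN (-x)
    rw [map_neg, show -x = (-1 : ℝ) • x by simp, hN.map_smul, abs_neg, abs_one, one_mul] at hneg
    constructor <;> linarith [hgN x]
  · rw [← hg, hgv ⟨v, Submodule.mem_span_singleton_self v⟩,
      LinearPMap.mkSpanSingleton_apply]

end IsLatticeNorm

/-- The norm of the diagonal operator `D_λ : ℓ₂ⁿ → X`. -/
def diagOpNorm {n : ℕ} (N : (Fin n → ℝ) → ℝ) (lam : Fin n → ℝ) : ℝ :=
  sSup {r : ℝ | ∃ x : Fin n → ℝ, Real.sqrt (∑ i, x i ^ 2) ≤ 1 ∧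
    r = N (fun i => lam i * x i)}

section DiagOp

variable {n : ℕ} {N : (Fin n → ℝ) → ℝ}

lemma IsLatticeNorm.le_diagOpNorm (hN : IsLatticeNorm N) (lam : Fin n → ℝ) {x : Fin n → ℝ}
    (hx : ∑ i, x i ^ 2 ≤ 1) : N (fun i => lam i * x i) ≤ diagOpNorm N lam := by
  refine le_csSup ⟨N fun i => |lam i|, ?_⟩ ⟨x, Real.sqrt_le_one.2 hx, rfl⟩
  rintro r ⟨z, hz, rfl⟩
  refine hN.mono fun i => ?_
  have hzi : z i ^ 2 ≤ 1 :=
    (single_le_sum (fun j _ => sq_nonneg (z j)) (mem_univ i)).trans (Real.sqrt_le_one.1 hz)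
  rw [abs_mul, abs_abs]
  exact mul_le_of_le_one_right (abs_nonneg _) (sq_le_one_iff_abs_le_one _ |>.1 hzi)

lemma IsLatticeNorm.diagOpNorm_nonneg (hN : IsLatticeNorm N) (lam : Fin n → ℝ) :
    0 ≤ diagOpNorm N lam :=
  (hN.nonneg _).trans (hN.le_diagOpNorm lam (x := 0) (by simp))

lemma IsLatticeNorm.sqrt_sum_sq_mul_le_diagOpNorm (hN : IsLatticeNorm N) (lam : Fin n → ℝ)
    {g : Fin n → ℝ} (hg : dualNR N g ≤ 1) :
    √(∑ i, (lam i * g i) ^ 2) ≤ diagOpNorm N lam := by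
  obtain ⟨x, hx, hxw⟩ := exists_sum_sq_le_one_sum_mul_eq_sqrt fun i => lam i * g i
  calc √(∑ i, (lam i * g i) ^ 2) = ∑ i, (lam i * x i) * g i := by
        rw [← hxw]; exact sum_congr rfl fun i _ => by ring
    _ ≤ N (fun i => lam i * x i) * dualNR N g :=
        (le_abs_self _).trans (hN.abs_sum_mul_le_mul_dualNR _ g)
    _ ≤ N (fun i => lam i * x i) := mul_le_of_le_one_right (hN.nonneg _) hg
    _ ≤ diagOpNorm N lam := hN.le_diagOpNorm lam hx

lemma IsLatticeNorm.abs_le_of_powNorm_dualNR_le_one (hN : IsLatticeNorm N) {μ : Fin n → ℝ}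
    (hμ : powNorm 2 (dualNR N) μ ≤ 1) (i : Fin n) : |μ i| ≤ N (Pi.single i 1) ^ 2 := by
  have hg := hN.abs_sum_mul_le_mul_dualNR (Pi.single i 1) fun i => √|μ i|
  simp only [Pi.single_apply, ite_mul, one_mul, zero_mul, sum_ite_eq', mem_univ, if_true,
    abs_of_nonneg (Real.sqrt_nonneg _)] at hg
  rw [← Real.sqrt_le_left (hN.single_pos i).le]
  exact hg.trans (mul_le_of_le_one_right (hN.single_pos i).le
    (apply_sqrt_abs_le_one_of_powNorm_two_le_one hμ))

lemma IsLatticeNorm.diagOpNorm_le (hN : IsLatticeNorm N) (lam : Fin n → ℝ) :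
    diagOpNorm N lam ≤ √(dualNR (powNorm 2 (dualNR N)) fun i => lam i ^ 2) := by
  refine Real.sSup_le ?_ (Real.sqrt_nonneg _)
  rintro r ⟨x, hx, rfl⟩
  obtain ⟨y, hy, hyx⟩ := hN.exists_dualNR_le_one_sum_mul_eq fun i => lam i * x i
  have hy2 : powNorm 2 (dualNR N) (fun i => y i ^ 2) ≤ 1 := by
    simp only [powNorm_two_eq, abs_pow, Real.sqrt_sq (abs_nonneg _)]
    exact pow_le_one₀ (hN.dualNR_nonneg _) ((hN.dualNR_abs_le y).trans hy)
  have hQ : ∑ i, (lam i * y i) ^ 2 ≤ dualNR (powNorm 2 (dualNR N)) fun i => lam i ^ 2 :=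
    calc ∑ i, (lam i * y i) ^ 2 = ∑ i, y i ^ 2 * lam i ^ 2 := sum_congr rfl fun i _ => by ring
      _ ≤ |∑ i, y i ^ 2 * lam i ^ 2| := le_abs_self _
      _ ≤ _ := abs_sum_mul_le_dualNR_of_abs_le _
          (fun _ => hN.abs_le_of_powNorm_dualNR_le_one) hy2 _
  calc N (fun i => lam i * x i) = ∑ i, x i * (lam i * y i) := by
        rw [← hyx]; exact sum_congr rfl fun i _ => by ring
    _ ≤ √(∑ i, x i ^ 2) * √(∑ i, (lam i * y i) ^ 2) := Real.sum_mul_le_sqrt_mul_sqrt _ _ _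
    _ ≤ √(∑ i, (lam i * y i) ^ 2) := mul_le_of_le_one_left (Real.sqrt_nonneg _) hx
    _ ≤ _ := Real.sqrt_le_sqrt hQ

lemma IsLatticeNorm.sqrt_dualNR_powNorm_le_diagOpNorm (hN : IsLatticeNorm N) (lam : Fin n → ℝ) :
    √(dualNR (powNorm 2 (dualNR N)) fun i => lam i ^ 2) ≤ diagOpNorm N lam := by
  rw [Real.sqrt_le_left (hN.diagOpNorm_nonneg lam)]
  refine dualNR_le (sq_nonneg _) fun μ hμ => ?_
  have hg := apply_sqrt_abs_le_one_of_powNorm_two_le_one hμ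
  calc |∑ i, μ i * lam i ^ 2| ≤ ∑ i, (lam i * √|μ i|) ^ 2 := by
        refine (abs_sum_le_sum_abs _ _).trans_eq (sum_congr rfl fun i _ => ?_)
        rw [mul_pow, Real.sq_sqrt (abs_nonneg _), abs_mul, abs_of_nonneg (sq_nonneg (lam i)),
          mul_comm]
    _ = √(∑ i, (lam i * √|μ i|) ^ 2) ^ 2 :=
        (Real.sq_sqrt (sum_nonneg fun i _ => sq_nonneg _)).symm
    _ ≤ diagOpNorm N lam ^ 2 :=
        pow_le_pow_left₀ (Real.sqrt_nonneg _) (hN.sqrt_sum_sq_mul_le_diagOpNorm lam hg) 2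

end DiagOp

theorem statement1_general {n : ℕ} (N : (Fin n → ℝ) → ℝ) (hN : IsLatticeNorm N)
    (lam : Fin n → ℝ) :
    sSup {r : ℝ | ∃ x : Fin n → ℝ, Real.sqrt (∑ i, x i ^ 2) ≤ 1 ∧
        r = N (fun i => lam i * x i)} =
      Real.sqrt (dualNR (powNorm 2 (dualNR N)) fun i => lam i ^ 2) :=
  le_antisymm (hN.diagOpNorm_le lam) (hN.sqrt_dualNR_powNorm_le_diagOpNorm lam)

/-- for a 2-concave lattice norm with constant 1,
`‖D_λ : ℓ₂ⁿ → X‖ = ‖λ‖_{(((X')²)')^{1/2}} = ‖|λ|²‖_{((X')²)'}^{1/2}`. -/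
theorem statement1 {n : ℕ} (N : (Fin n → ℝ) → ℝ) (hN : IsLatticeNorm N)
    (hconc : ConcaveWith 2 1 N) (lam : Fin n → ℝ) :
    sSup {r : ℝ | ∃ x : Fin n → ℝ, Real.sqrt (∑ i, x i ^ 2) ≤ 1 ∧
        r = N (fun i => lam i * x i)} =
      Real.sqrt (dualNR (powNorm 2 (dualNR N)) fun i => lam i ^ 2) :=
  statement1_general N hN lam

end Paper
end
end

section
/- Let X₀, X₁ be n-dimensional Banach lattices, 0 < r < ∞, with M^(max(1,r))(X₀) = M^(max(1,r))(X₁) = 1, and let 0 < θ < 1. Then the r-th power of the Calderón product equals the Calderón product of the r-th powers isometrically: (X₀^{1-θ}X₁^{θ})^r = (X₀^r)^{1-θ}(X₁^r)^{θ}. -/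
open Complex MeasureTheory Finset

noncomputable section

namespace Paper

variable {Ω : Type*} [MeasurableSpace Ω] {μ : Measure Ω} {K : Type*} [RCLike K]

/-
Substituting `g ↦ |g|^r`, `h ↦ |h|^r` identifies the factorizations `|x| = |g|^{1-θ}|h|^θ` of `x`
with the factorizations of `|x|^{1/r}`, and under this identification the cost
`‖g‖_{X₀^r}^{1-θ}‖h‖_{X₁^r}^θ` is the `r`-th power of the corresponding cost in `X₀^{1-θ}X₁^θ`.
Since `t ↦ t^r` is a continuous increasing map of `[0, ∞)`, it commutes with the infimum.
-/

lemma mul_rpow_rpow_comm {a b : ℝ} (ha : 0 ≤ a) (hb : 0 ≤ b) (p q s : ℝ) :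
    (a ^ p * b ^ q) ^ s = (a ^ s) ^ p * (b ^ s) ^ q := by
  rw [Real.mul_rpow (Real.rpow_nonneg ha _) (Real.rpow_nonneg hb _), ← Real.rpow_mul ha,
    ← Real.rpow_mul hb, ← Real.rpow_mul ha, ← Real.rpow_mul hb, mul_comm s, mul_comm s]

lemma sInf_rpow {s : Set ℝ} (hs : s.Nonempty) (hs₀ : ∀ c ∈ s, 0 ≤ c) {r : ℝ} (hr : 0 ≤ r) :
    sInf s ^ r = sInf ((· ^ r) '' s) :=
  MonotoneOn.map_csInf_of_continuousWithinAt
    (Real.continuous_rpow_const hr).continuousWithinAt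
    ((Real.monotoneOn_rpow_Ici_of_exponent_nonneg hr).mono hs₀) hs ⟨0, hs₀⟩

variable {n : ℕ}

lemma IsLatticeNorm.map_abs {N : (Fin n → ℝ) → ℝ} (hN : IsLatticeNorm N) (g : Fin n → ℝ) :
    N (fun i => |g i|) = N g :=
  le_antisymm (hN.2.2.2.2 _ _ fun i => by simp) (hN.2.2.2.2 _ _ fun i => by simp)

lemma powNorm_abs_rpow {N : (Fin n → ℝ) → ℝ} (hN : IsLatticeNorm N) {r : ℝ} (hr : r ≠ 0)
    (g : Fin n → ℝ) : powNorm r N (fun i => |g i| ^ r) = N g ^ r := by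
  have hg : (fun i => |(|g i| ^ r)| ^ (1 / r)) = fun i => |g i| := by
    ext i
    rw [abs_of_nonneg (Real.rpow_nonneg (abs_nonneg _) _), one_div,
      Real.rpow_rpow_inv (abs_nonneg _) hr]
  rw [powNorm, hg, hN.map_abs]

def calSet (θ : ℝ) (N₀ N₁ : (Fin n → ℝ) → ℝ) (f : Fin n → ℝ) : Set ℝ :=
  {c : ℝ | ∃ g h : Fin n → ℝ, (∀ i, |f i| = |g i| ^ (1 - θ) * |h i| ^ θ) ∧
    c = N₀ g ^ (1 - θ) * N₁ h ^ θ}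

lemma calNorm_eq_sInf (θ : ℝ) (N₀ N₁ : (Fin n → ℝ) → ℝ) (f : Fin n → ℝ) :
    calNorm θ N₀ N₁ f = sInf (calSet θ N₀ N₁ f) :=
  rfl

lemma calSet_nonempty (θ : ℝ) (N₀ N₁ : (Fin n → ℝ) → ℝ) (f : Fin n → ℝ) :
    (calSet θ N₀ N₁ f).Nonempty := by
  refine ⟨_, f, f, fun i => ?_, rfl⟩
  rw [← Real.rpow_add' (abs_nonneg _) (by norm_num), sub_add_cancel, Real.rpow_one]

lemma calSet_nonneg {θ : ℝ} {N₀ N₁ : (Fin n → ℝ) → ℝ} (hN₀ : ∀ g, 0 ≤ N₀ g)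
    (hN₁ : ∀ h, 0 ≤ N₁ h) (f : Fin n → ℝ) : ∀ c ∈ calSet θ N₀ N₁ f, 0 ≤ c := by
  rintro c ⟨g, h, -, rfl⟩
  exact mul_nonneg (Real.rpow_nonneg (hN₀ g) _) (Real.rpow_nonneg (hN₁ h) _)

lemma calSet_powNorm {r : ℝ} (hr : r ≠ 0) (θ : ℝ) {N₀ N₁ : (Fin n → ℝ) → ℝ}
    (h₀ : IsLatticeNorm N₀) (h₁ : IsLatticeNorm N₁) (x : Fin n → ℝ) :
    calSet θ (powNorm r N₀) (powNorm r N₁) x =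
      (· ^ r) '' calSet θ N₀ N₁ (fun i => |x i| ^ (1 / r)) := by
  have habs_rpow (t s : ℝ) : |(|t| ^ s)| = |t| ^ s :=
    abs_of_nonneg (Real.rpow_nonneg (abs_nonneg t) s)
  ext c
  constructor
  · rintro ⟨g, h, hx, rfl⟩
    refine ⟨_, ⟨fun i => |g i| ^ (1 / r), fun i => |h i| ^ (1 / r), fun i => ?_, rfl⟩, ?_⟩
    · simp only [habs_rpow]
      rw [← mul_rpow_rpow_comm (abs_nonneg _) (abs_nonneg _), ← hx]
    · exact mul_rpow_rpow_comm (h₀.1 _) (h₁.1 _) _ _ _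
  · rintro ⟨_, ⟨g, h, hx, rfl⟩, rfl⟩
    refine ⟨fun i => |g i| ^ r, fun i => |h i| ^ r, fun i => ?_, ?_⟩
    · simp only [habs_rpow]
      rw [← mul_rpow_rpow_comm (abs_nonneg _) (abs_nonneg _), ← hx, habs_rpow, one_div,
        Real.rpow_inv_rpow (abs_nonneg _) hr]
    · rw [powNorm_abs_rpow h₀ hr, powNorm_abs_rpow h₁ hr]
      exact mul_rpow_rpow_comm (h₀.1 _) (h₁.1 _) _ _ _

theorem statement4_general {n : ℕ} (r : ℝ) (hr : 0 < r) (θ : ℝ)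
    (N₀ N₁ : (Fin n → ℝ) → ℝ) (h₀ : IsLatticeNorm N₀) (h₁ : IsLatticeNorm N₁)
    (x : Fin n → ℝ) :
    powNorm r (calNorm θ N₀ N₁) x = calNorm θ (powNorm r N₀) (powNorm r N₁) x := by
  rw [powNorm, calNorm_eq_sInf, calNorm_eq_sInf, calSet_powNorm hr.ne' θ h₀ h₁]
  exact sInf_rpow (calSet_nonempty θ N₀ N₁ _) (calSet_nonneg h₀.1 h₁.1 _) hr.le

/-- `(X₀^{1-θ}X₁^θ)^r = (X₀^r)^{1-θ}(X₁^r)^θ` isometrically,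
provided the `max(1,r)`-convexity constants of `X₀` and `X₁` equal `1`. -/
theorem statement4 {n : ℕ} (r : ℝ) (hr : 0 < r) (θ : ℝ) (hθ : 0 < θ) (hθ1 : θ < 1)
    (N₀ N₁ : (Fin n → ℝ) → ℝ) (h₀ : IsLatticeNorm N₀) (h₁ : IsLatticeNorm N₁)
    (hc₀ : ConvexWith (max 1 r) 1 N₀) (hc₁ : ConvexWith (max 1 r) 1 N₁)
    (x : Fin n → ℝ) :
    powNorm r (calNorm θ N₀ N₁) x = calNorm θ (powNorm r N₀) (powNorm r N₁) x :=
  statement4_general r hr θ N₀ N₁ h₀ h₁ x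

end Paper
end
end

section
/- Let X₀, X₁ be Banach function spaces over the same σ-finite measure space, both r-convex for some 1 ≤ r < ∞, and let 0 < θ < 1. Then the Calderón product X₀^{1-θ}X₁^{θ} is r-convex with M^(r)(X₀^{1-θ}X₁^{θ}) ≤ M^(r)(X₀)^{1-θ}·M^(r)(X₁)^{θ}. -/
open Complex MeasureTheory Finset

noncomputable section

namespace Paper

variable {Ω : Type*} [MeasurableSpace Ω] {μ : Measure Ω} {K : Type*} [RCLike K]

/-- The Calderón product membership for Banach function spaces. -/
def BFS.calMem {Ω' : Type*} [MeasurableSpace Ω'] {μ' : Measure Ω'} {K' : Type*}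
    [RCLike K'] (X₀ X₁ : BFS Ω' μ' K') (θ : ℝ) (f : Ω' → K') : Prop :=
  AEStronglyMeasurable f μ' ∧ ∃ g h, X₀.mem g ∧ X₁.mem h ∧
    ∀ᵐ ω ∂μ', ‖f ω‖ = ‖g ω‖ ^ (1 - θ) * ‖h ω‖ ^ θ

/-- The Calderón product norm for Banach function spaces. -/
def BFS.calNrm {Ω' : Type*} [MeasurableSpace Ω'] {μ' : Measure Ω'} {K' : Type*}
    [RCLike K'] (X₀ X₁ : BFS Ω' μ' K') (θ : ℝ) (f : Ω' → K') : ℝ :=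
  sInf {c : ℝ | ∃ g h, X₀.mem g ∧ X₁.mem h ∧
    (∀ᵐ ω ∂μ', ‖f ω‖ = ‖g ω‖ ^ (1 - θ) * ‖h ω‖ ^ θ) ∧
    c = X₀.nrm g ^ (1 - θ) * X₁.nrm h ^ θ}

/-!
Choose representations `|fᵢ| = |gᵢ|^{1-θ} |hᵢ|^θ` that are balanced, i.e. `‖gᵢ‖` and `‖hᵢ‖` are
both close to the Calderón norm of `fᵢ`; this is possible because `(λ^θ gᵢ, λ^{θ-1} hᵢ)` represents
`fᵢ` as well. With `G = (∑ |gᵢ|^r)^{1/r}` and `H = (∑ |hᵢ|^r)^{1/r}`, Hölder's inequality for the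
exponents `1/(1-θ)` and `1/θ` gives `(∑ |fᵢ|^r)^{1/r} ≤ G^{1-θ} H^θ` pointwise. The Calderón
product is an ideal, so the left side belongs to it with norm at most `‖G‖^{1-θ} ‖H‖^θ`, and
`r`-convexity bounds `‖G‖ ≤ C₀ (∑ ‖gᵢ‖^r)^{1/r}` and `‖H‖ ≤ C₁ (∑ ‖hᵢ‖^r)^{1/r}`.
-/

theorem rpow_one_sub_mul_rpow_self {x : ℝ} (hx : 0 ≤ x) (θ : ℝ) :
    x ^ (1 - θ) * x ^ θ = x := by
  rw [← Real.rpow_add' hx (by rw [sub_add_cancel]; exact one_ne_zero), sub_add_cancel,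
    Real.rpow_one]

theorem sum_rpow_one_sub_mul_rpow_le {ι : Type*} (s : Finset ι) {a b : ι → ℝ}
    (ha : ∀ i, 0 ≤ a i) (hb : ∀ i, 0 ≤ b i) {θ : ℝ} (hθ : 0 < θ) (hθ1 : θ < 1) :
    ∑ i ∈ s, a i ^ (1 - θ) * b i ^ θ ≤ (∑ i ∈ s, a i) ^ (1 - θ) * (∑ i ∈ s, b i) ^ θ := by
  have hs : 0 < 1 - θ := sub_pos.2 hθ1
  simpa [Real.rpow_rpow_inv (ha _) hs.ne', Real.rpow_rpow_inv (hb _) hθ.ne'] using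
    Real.inner_le_Lp_mul_Lq_of_nonneg s (Real.HolderConjugate.one_sub_inv_inv hθ hθ1)
      (f := fun i => a i ^ (1 - θ)) (g := fun i => b i ^ θ)
      (fun i _ => Real.rpow_nonneg (ha i) _) (fun i _ => Real.rpow_nonneg (hb i) _)

theorem Lr_rpow_one_sub_mul_rpow_le {ι : Type*} (s : Finset ι) {a b : ι → ℝ}
    (ha : ∀ i, 0 ≤ a i) (hb : ∀ i, 0 ≤ b i) {θ : ℝ} (hθ : 0 < θ) (hθ1 : θ < 1)
    {r : ℝ} (hr : 0 < r) :
    (∑ i ∈ s, (a i ^ (1 - θ) * b i ^ θ) ^ r) ^ (1 / r) ≤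
      ((∑ i ∈ s, a i ^ r) ^ (1 / r)) ^ (1 - θ) * ((∑ i ∈ s, b i ^ r) ^ (1 / r)) ^ θ := by
  have hA : 0 ≤ ∑ i ∈ s, a i ^ r := Finset.sum_nonneg fun i _ => Real.rpow_nonneg (ha i) r
  have hB : 0 ≤ ∑ i ∈ s, b i ^ r := Finset.sum_nonneg fun i _ => Real.rpow_nonneg (hb i) r
  have hswap : ∀ {x : ℝ} (y z : ℝ), 0 ≤ x → (x ^ y) ^ z = (x ^ z) ^ y := fun y z hx => by
    rw [← Real.rpow_mul hx, ← Real.rpow_mul hx, mul_comm]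
  have hsum : ∑ i ∈ s, (a i ^ (1 - θ) * b i ^ θ) ^ r ≤
      (∑ i ∈ s, a i ^ r) ^ (1 - θ) * (∑ i ∈ s, b i ^ r) ^ θ := by
    simp_rw [Real.mul_rpow (Real.rpow_nonneg (ha _) _) (Real.rpow_nonneg (hb _) _),
      hswap _ r (ha _), hswap _ r (hb _)]
    exact sum_rpow_one_sub_mul_rpow_le s (fun i => Real.rpow_nonneg (ha i) r)
      (fun i => Real.rpow_nonneg (hb i) r) hθ hθ1
  calc (∑ i ∈ s, (a i ^ (1 - θ) * b i ^ θ) ^ r) ^ (1 / r)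
      ≤ ((∑ i ∈ s, a i ^ r) ^ (1 - θ) * (∑ i ∈ s, b i ^ r) ^ θ) ^ (1 / r) :=
        Real.rpow_le_rpow (Finset.sum_nonneg fun i _ => Real.rpow_nonneg
          (mul_nonneg (Real.rpow_nonneg (ha i) _) (Real.rpow_nonneg (hb i) _)) r) hsum
          (by positivity)
    _ = _ := by
      rw [Real.mul_rpow (Real.rpow_nonneg hA _) (Real.rpow_nonneg hB _), hswap _ _ hA,
        hswap _ _ hB]

open Filter Topology in
theorem le_mul_Lr_of_forall_le_mul_Lr_add {ι : Type*} (s : Finset ι) {x K r : ℝ}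
    {c : ι → ℝ} (hr : 0 ≤ r) (h : ∀ ε > 0, x ≤ K * (∑ i ∈ s, (c i + ε) ^ r) ^ (1 / r)) :
    x ≤ K * (∑ i ∈ s, c i ^ r) ^ (1 / r) := by
  have hcont : Continuous fun ε : ℝ => K * (∑ i ∈ s, (c i + ε) ^ r) ^ (1 / r) := by
    fun_prop (disch := positivity)
  refine ge_of_tendsto (x := 𝓝[>] 0) ?_ (eventually_nhdsWithin_of_forall h)
  simpa using (hcont.tendsto 0).mono_left nhdsWithin_le_nhds

namespace BFS

theorem nrm_zero (X : BFS Ω μ K) : X.nrm 0 = 0 := by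
  simpa using X.nrm_smul 0 0

theorem RConvexWith.one_le {X : BFS Ω μ K} {r C : ℝ} (hr : r ≠ 0) (hX : X.RConvexWith r C)
    {g : Ω → K} (hg : X.mem g) (hpos : 0 < X.nrm g) : 1 ≤ C := by
  obtain ⟨hmem, hle⟩ := hX 1 (fun _ => g) fun _ => hg
  simp only [Fin.sum_univ_one, one_div, Real.rpow_rpow_inv (norm_nonneg _) hr,
    Real.rpow_rpow_inv (X.nrm_nonneg _) hr] at hmem hle
  have hge := (X.ideal g _ (X.mem_meas g hg) hmem (ae_of_all _ fun ω => by simp)).2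
  exact le_of_mul_le_mul_right (by linarith) hpos

variable {X₀ X₁ : BFS Ω μ K} {θ : ℝ} {f : Ω → K}

theorem calNrm_nonneg : 0 ≤ calNrm X₀ X₁ θ f :=
  Real.sInf_nonneg <| by
    rintro _ ⟨g, h, -, -, -, rfl⟩
    exact mul_nonneg (Real.rpow_nonneg (X₀.nrm_nonneg g) _) (Real.rpow_nonneg (X₁.nrm_nonneg h) _)

theorem calNrm_le {g h : Ω → K} (hg : X₀.mem g) (hh : X₁.mem h)
    (hfgh : ∀ᵐ ω ∂μ, ‖f ω‖ = ‖g ω‖ ^ (1 - θ) * ‖h ω‖ ^ θ) :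
    calNrm X₀ X₁ θ f ≤ X₀.nrm g ^ (1 - θ) * X₁.nrm h ^ θ := by
  refine csInf_le ⟨0, ?_⟩ ⟨g, h, hg, hh, hfgh, rfl⟩
  rintro _ ⟨g, h, -, -, -, rfl⟩
  exact mul_nonneg (Real.rpow_nonneg (X₀.nrm_nonneg g) _) (Real.rpow_nonneg (X₁.nrm_nonneg h) _)

theorem exists_rep_lt (hf : calMem X₀ X₁ θ f) {d : ℝ} (hd : calNrm X₀ X₁ θ f < d) :
    ∃ g h, X₀.mem g ∧ X₁.mem h ∧ (∀ᵐ ω ∂μ, ‖f ω‖ = ‖g ω‖ ^ (1 - θ) * ‖h ω‖ ^ θ) ∧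
      X₀.nrm g ^ (1 - θ) * X₁.nrm h ^ θ < d := by
  obtain ⟨-, g, h, hg, hh, hfgh⟩ := hf
  obtain ⟨_, ⟨g, h, hg, hh, hfgh, rfl⟩, hlt⟩ :=
    exists_lt_of_csInf_lt (by exact ⟨_, g, h, hg, hh, hfgh, rfl⟩) hd
  exact ⟨g, h, hg, hh, hfgh, hlt⟩

theorem exists_balanced_rep (hθ : 0 < θ) (hθ1 : θ < 1) {g h : Ω → K} (hg : X₀.mem g)
    (hh : X₁.mem h) (hfgh : ∀ᵐ ω ∂μ, ‖f ω‖ = ‖g ω‖ ^ (1 - θ) * ‖h ω‖ ^ θ) :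
    ∃ g' h', X₀.mem g' ∧ X₁.mem h' ∧ (∀ᵐ ω ∂μ, ‖f ω‖ = ‖g' ω‖ ^ (1 - θ) * ‖h' ω‖ ^ θ) ∧
      X₀.nrm g' ≤ X₀.nrm g ^ (1 - θ) * X₁.nrm h ^ θ ∧
      X₁.nrm h' ≤ X₀.nrm g ^ (1 - θ) * X₁.nrm h ^ θ := by
  have hs : 0 < 1 - θ := sub_pos.2 hθ1
  set a := X₀.nrm g
  set b := X₁.nrm h
  set N := a ^ (1 - θ) * b ^ θ
  have hN : 0 ≤ N := mul_nonneg (Real.rpow_nonneg (X₀.nrm_nonneg g) _)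
    (Real.rpow_nonneg (X₁.nrm_nonneg h) _)
  rcases (X₀.nrm_nonneg g).eq_or_lt with ha | ha
  · refine ⟨0, 0, X₀.mem_zero, X₁.mem_zero, ?_, by rwa [nrm_zero], by rwa [nrm_zero]⟩
    filter_upwards [hfgh, X₀.nrm_eq_zero g hg ha.symm] with ω hω hg0
    simp [hω, hg0, Real.zero_rpow hs.ne', Real.zero_rpow hθ.ne']
  rcases (X₁.nrm_nonneg h).eq_or_lt with hb | hb
  · refine ⟨0, 0, X₀.mem_zero, X₁.mem_zero, ?_, by rwa [nrm_zero], by rwa [nrm_zero]⟩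
    filter_upwards [hfgh, X₁.nrm_eq_zero h hh hb.symm] with ω hω hh0
    simp [hω, hh0, Real.zero_rpow hs.ne', Real.zero_rpow hθ.ne']
  -- rescale `g` and `h` by `N / a` and `N / b`, whose weighted geometric mean is `1`
  have hNpos : 0 < N := mul_pos (Real.rpow_pos_of_pos ha _) (Real.rpow_pos_of_pos hb _)
  have hscale : (N / a) ^ (1 - θ) * (N / b) ^ θ = 1 := by
    rw [Real.div_rpow hN ha.le, Real.div_rpow hN hb.le, div_mul_div_comm,
      rpow_one_sub_mul_rpow_self hN, div_self hNpos.ne']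
  refine ⟨((N / a : ℝ) : K) • g, ((N / b : ℝ) : K) • h, X₀.mem_smul _ _ hg,
    X₁.mem_smul _ _ hh, ?_, ?_, ?_⟩
  · filter_upwards [hfgh] with ω hω
    rw [Pi.smul_apply, Pi.smul_apply, norm_smul, norm_smul, RCLike.norm_ofReal,
      RCLike.norm_ofReal, abs_of_pos (by positivity), abs_of_pos (by positivity),
      Real.mul_rpow (by positivity) (norm_nonneg _),
      Real.mul_rpow (by positivity) (norm_nonneg _), mul_mul_mul_comm, hscale, one_mul, hω]
  · rw [X₀.nrm_smul, RCLike.norm_ofReal, abs_of_pos (by positivity), div_mul_cancel₀ _ ha.ne']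
  · rw [X₁.nrm_smul, RCLike.norm_ofReal, abs_of_pos (by positivity), div_mul_cancel₀ _ hb.ne']

theorem calMem_and_calNrm_le_of_le (hθ : 0 < θ) {F G H : Ω → K}
    (hF : AEStronglyMeasurable F μ) (hG : X₀.mem G) (hH : X₁.mem H)
    (hle : ∀ᵐ ω ∂μ, ‖F ω‖ ≤ ‖G ω‖ ^ (1 - θ) * ‖H ω‖ ^ θ) :
    calMem X₀ X₁ θ F ∧ calNrm X₀ X₁ θ F ≤ X₀.nrm G ^ (1 - θ) * X₁.nrm H ^ θ := by
  -- `H'` solves `‖F‖ = ‖G‖^{1-θ} ‖H'‖^θ`; where `G = 0` the junk value `x / 0 = 0` gives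
  -- `H' = 0`, which is right because `F = 0` there.
  set H' : Ω → K := fun ω => (((‖F ω‖ / ‖G ω‖ ^ (1 - θ)) ^ θ⁻¹ : ℝ) : K)
  have hH'meas : AEStronglyMeasurable H' μ :=
    (RCLike.measurable_ofReal.comp_aemeasurable ((hF.norm.aemeasurable.div
      ((X₀.mem_meas G hG).norm.aemeasurable.pow_const _)).pow_const _)).aestronglyMeasurable
  have key : ∀ᵐ ω ∂μ, ‖F ω‖ = ‖G ω‖ ^ (1 - θ) * ‖H' ω‖ ^ θ ∧ ‖H' ω‖ ≤ ‖H ω‖ := by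
    filter_upwards [hle] with ω hω
    have hy : 0 ≤ ‖G ω‖ ^ (1 - θ) := Real.rpow_nonneg (norm_nonneg _) _
    have hq : 0 ≤ ‖F ω‖ / ‖G ω‖ ^ (1 - θ) := div_nonneg (norm_nonneg _) hy
    simp only [H', RCLike.norm_ofReal, abs_of_nonneg (Real.rpow_nonneg hq _),
      Real.rpow_inv_rpow hq hθ.ne']
    constructor
    · rcases hy.eq_or_lt with hy0 | hy0
      · rw [← hy0, zero_mul] at hω
        rw [← hy0, zero_mul]
        exact le_antisymm hω (norm_nonneg _)
      · rw [mul_div_cancel₀ _ hy0.ne']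
    · rw [Real.rpow_inv_le_iff_of_pos hq (norm_nonneg _) hθ]
      exact div_le_of_le_mul₀ hy (Real.rpow_nonneg (norm_nonneg _) _) (by linarith)
  obtain ⟨hH'mem, hH'le⟩ := X₁.ideal H' H hH'meas hH (key.mono fun _ h => h.2)
  have hrep := key.mono fun _ h => h.1
  refine ⟨⟨hF, G, H', hG, hH'mem, hrep⟩, (calNrm_le hG hH'mem hrep).trans ?_⟩
  exact mul_le_mul_of_nonneg_left (Real.rpow_le_rpow (X₁.nrm_nonneg _) hH'le hθ.le)
    (Real.rpow_nonneg (X₀.nrm_nonneg _) _)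

theorem calNrm_eq_zero_of_nrm_eq_zero (hθ : 0 < θ) (hθ1 : θ < 1)
    (htriv : (∀ g, X₀.mem g → X₀.nrm g = 0) ∨ ∀ h, X₁.mem h → X₁.nrm h = 0)
    (hf : calMem X₀ X₁ θ f) : calNrm X₀ X₁ θ f = 0 := by
  obtain ⟨-, g, h, hg, hh, hfgh⟩ := hf
  refine le_antisymm ((calNrm_le hg hh hfgh).trans_eq ?_) calNrm_nonneg
  rcases htriv with h₀ | h₁
  · rw [h₀ g hg, Real.zero_rpow (sub_pos.2 hθ1).ne', zero_mul]
  · rw [h₁ h hh, Real.zero_rpow hθ.ne', mul_zero]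

theorem calMem_and_calNrm_Lr_le {r C₀ C₁ : ℝ} (hr : 0 < r) (h₀ : X₀.RConvexWith r C₀)
    (h₁ : X₁.RConvexWith r C₁) (hθ : 0 < θ) (hθ1 : θ < 1) {m : ℕ} {f g h : Fin m → Ω → K}
    (hf : ∀ i, AEStronglyMeasurable (f i) μ) (hg : ∀ i, X₀.mem (g i)) (hh : ∀ i, X₁.mem (h i))
    (hfgh : ∀ i, ∀ᵐ ω ∂μ, ‖f i ω‖ = ‖g i ω‖ ^ (1 - θ) * ‖h i ω‖ ^ θ) :
    calMem X₀ X₁ θ (fun ω => (((∑ i, ‖f i ω‖ ^ r) ^ (1 / r) : ℝ) : K)) ∧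
      calNrm X₀ X₁ θ (fun ω => (((∑ i, ‖f i ω‖ ^ r) ^ (1 / r) : ℝ) : K)) ≤
        (C₀ * (∑ i, X₀.nrm (g i) ^ r) ^ (1 / r)) ^ (1 - θ) *
          (C₁ * (∑ i, X₁.nrm (h i) ^ r) ^ (1 / r)) ^ θ := by
  obtain ⟨hGmem, hGle⟩ := h₀ m g hg
  obtain ⟨hHmem, hHle⟩ := h₁ m h hh
  have hFmeas : AEStronglyMeasurable
      (fun ω => (((∑ i, ‖f i ω‖ ^ r) ^ (1 / r) : ℝ) : K)) μ :=
    (RCLike.measurable_ofReal.comp_aemeasurable ((Finset.aemeasurable_fun_sum _ fun i _ =>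
      (hf i).norm.aemeasurable.pow_const r).pow_const _)).aestronglyMeasurable
  have hle : ∀ᵐ ω ∂μ, ‖(((∑ i, ‖f i ω‖ ^ r) ^ (1 / r) : ℝ) : K)‖ ≤
      ‖(((∑ i, ‖g i ω‖ ^ r) ^ (1 / r) : ℝ) : K)‖ ^ (1 - θ) *
        ‖(((∑ i, ‖h i ω‖ ^ r) ^ (1 / r) : ℝ) : K)‖ ^ θ := by
    filter_upwards [ae_all_iff.2 hfgh] with ω hω
    simp (disch := positivity) only [RCLike.norm_ofReal, hω, abs_of_nonneg]
    exact Lr_rpow_one_sub_mul_rpow_le _ (fun i => norm_nonneg (g i ω))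
      (fun i => norm_nonneg (h i ω)) hθ hθ1 hr
  obtain ⟨hmem, hnrm⟩ := calMem_and_calNrm_le_of_le hθ hFmeas hGmem hHmem hle
  refine ⟨hmem, hnrm.trans (mul_le_mul ?_ ?_ ?_ ?_)⟩
  · exact Real.rpow_le_rpow (X₀.nrm_nonneg _) hGle (sub_pos.2 hθ1).le
  · exact Real.rpow_le_rpow (X₁.nrm_nonneg _) hHle hθ.le
  · exact Real.rpow_nonneg (X₁.nrm_nonneg _) _
  · exact Real.rpow_nonneg ((X₀.nrm_nonneg _).trans hGle) _

theorem calNrm_Lr_le_of_lt {r C₀ C₁ : ℝ} (hr : 0 < r) (h₀ : X₀.RConvexWith r C₀)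
    (h₁ : X₁.RConvexWith r C₁) (hC₀ : 0 ≤ C₀) (hC₁ : 0 ≤ C₁) (hθ : 0 < θ) (hθ1 : θ < 1)
    {m : ℕ} {f : Fin m → Ω → K} (hf : ∀ i, calMem X₀ X₁ θ (f i)) {d : Fin m → ℝ}
    (hd : ∀ i, calNrm X₀ X₁ θ (f i) < d i) :
    calNrm X₀ X₁ θ (fun ω => (((∑ i, ‖f i ω‖ ^ r) ^ (1 / r) : ℝ) : K)) ≤
      C₀ ^ (1 - θ) * C₁ ^ θ * (∑ i, d i ^ r) ^ (1 / r) := by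
  choose g h hg hh hfgh hlt using fun i => exists_rep_lt (hf i) (hd i)
  choose g' h' hg' hh' hfgh' hg'le hh'le using
    fun i => exists_balanced_rep hθ hθ1 (hg i) (hh i) (hfgh i)
  set D := (∑ i, d i ^ r) ^ (1 / r)
  set A := (∑ i, X₀.nrm (g' i) ^ r) ^ (1 / r)
  set B := (∑ i, X₁.nrm (h' i) ^ r) ^ (1 / r)
  have hLr_le : ∀ u : Fin m → ℝ, (∀ i, 0 ≤ u i) → (∀ i, u i ≤ d i) →
      0 ≤ (∑ i, u i ^ r) ^ (1 / r) ∧ (∑ i, u i ^ r) ^ (1 / r) ≤ D := fun u hu hud =>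
    have hsum := Finset.sum_nonneg fun i (_ : i ∈ univ) => Real.rpow_nonneg (hu i) r
    ⟨Real.rpow_nonneg hsum _, Real.rpow_le_rpow hsum
      (Finset.sum_le_sum fun i _ => Real.rpow_le_rpow (hu i) (hud i) hr.le) (by positivity)⟩
  obtain ⟨hA, hAD⟩ :=
    hLr_le _ (fun i => X₀.nrm_nonneg (g' i)) fun i => (hg'le i).trans (hlt i).le
  obtain ⟨hB, hBD⟩ :=
    hLr_le _ (fun i => X₁.nrm_nonneg (h' i)) fun i => (hh'le i).trans (hlt i).le
  have hD : 0 ≤ D := hA.trans hAD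
  calc _ ≤ (C₀ * A) ^ (1 - θ) * (C₁ * B) ^ θ :=
      (calMem_and_calNrm_Lr_le hr h₀ h₁ hθ hθ1 (fun i => (hf i).1) hg' hh' hfgh').2
    _ ≤ (C₀ * D) ^ (1 - θ) * (C₁ * D) ^ θ := by
      have hs : 0 < 1 - θ := sub_pos.2 hθ1
      gcongr
    _ = C₀ ^ (1 - θ) * C₁ ^ θ * D := by
      rw [Real.mul_rpow hC₀ hD, Real.mul_rpow hC₁ hD, mul_mul_mul_comm,
        rpow_one_sub_mul_rpow_self hD]

end BFS

theorem statement5_general {Ω' : Type*} [MeasurableSpace Ω'] (μ : Measure Ω')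
    (X₀ X₁ : BFS Ω' μ ℝ)
    (r : ℝ) (hr : 1 ≤ r) (C₀ C₁ : ℝ)
    (h₀ : X₀.RConvexWith r C₀) (h₁ : X₁.RConvexWith r C₁)
    (θ : ℝ) (hθ : 0 < θ) (hθ1 : θ < 1)
    (m : ℕ) (f : Fin m → Ω' → ℝ) (hf : ∀ i, BFS.calMem X₀ X₁ θ (f i)) :
    BFS.calMem X₀ X₁ θ (fun ω => (∑ i, ‖f i ω‖ ^ r) ^ (1 / r)) ∧
    BFS.calNrm X₀ X₁ θ (fun ω => (∑ i, ‖f i ω‖ ^ r) ^ (1 / r)) ≤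
      (C₀ ^ (1 - θ) * C₁ ^ θ) * (∑ i, BFS.calNrm X₀ X₁ θ (f i) ^ r) ^ (1 / r) := by
  have hr0 : 0 < r := by linarith
  choose g h hg hh hfgh using fun i => (hf i).2
  have hmem : BFS.calMem X₀ X₁ θ (fun ω => (∑ i, ‖f i ω‖ ^ r) ^ (1 / r)) :=
    (BFS.calMem_and_calNrm_Lr_le hr0 h₀ h₁ hθ hθ1 (fun i => (hf i).1) hg hh hfgh).1
  refine ⟨hmem, ?_⟩
  -- Unless `X₀` or `X₁` is trivial, when all Calderón norms vanish, `C₀, C₁ ≥ 1`; the sign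
  -- matters because `C ^ (1 - θ)` is a junk value for `C < 0`.
  by_cases htriv : (∀ g, X₀.mem g → X₀.nrm g = 0) ∨ ∀ h, X₁.mem h → X₁.nrm h = 0
  · simp only [BFS.calNrm_eq_zero_of_nrm_eq_zero hθ hθ1 htriv (hf _),
      BFS.calNrm_eq_zero_of_nrm_eq_zero hθ hθ1 htriv hmem, Real.zero_rpow hr0.ne',
      Finset.sum_const_zero, Real.zero_rpow (one_div_pos.2 hr0).ne', mul_zero, le_refl]
  push Not at htriv
  obtain ⟨⟨g₀, hg₀, hg₀pos⟩, ⟨h₀', hh₀', hh₀'pos⟩⟩ := htriv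
  have hC₀ := h₀.one_le hr0.ne' hg₀ ((X₀.nrm_nonneg _).lt_of_ne' hg₀pos)
  have hC₁ := h₁.one_le hr0.ne' hh₀' ((X₁.nrm_nonneg _).lt_of_ne' hh₀'pos)
  refine le_mul_Lr_of_forall_le_mul_Lr_add _ hr0.le fun ε hε => ?_
  exact BFS.calNrm_Lr_le_of_lt hr0 h₀ h₁ (by linarith) (by linarith) hθ hθ1 hf
    fun i => lt_add_of_pos_right _ hε

/-- the Calderón product of two `r`-convex Banach function spaces
is `r`-convex with constant `≤ M^(r)(X₀)^{1-θ}·M^(r)(X₁)^θ`. -/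
theorem statement5 {Ω' : Type*} [MeasurableSpace Ω'] (μ : Measure Ω')
    [SigmaFinite μ] (hμc : μ.IsComplete) (X₀ X₁ : BFS Ω' μ ℝ)
    (r : ℝ) (hr : 1 ≤ r) (C₀ C₁ : ℝ)
    (h₀ : X₀.RConvexWith r C₀) (h₁ : X₁.RConvexWith r C₁)
    (θ : ℝ) (hθ : 0 < θ) (hθ1 : θ < 1)
    (m : ℕ) (f : Fin m → Ω' → ℝ) (hf : ∀ i, BFS.calMem X₀ X₁ θ (f i)) :
    BFS.calMem X₀ X₁ θ (fun ω => (∑ i, ‖f i ω‖ ^ r) ^ (1 / r)) ∧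
    BFS.calNrm X₀ X₁ θ (fun ω => (∑ i, ‖f i ω‖ ^ r) ^ (1 / r)) ≤
      (C₀ ^ (1 - θ) * C₁ ^ θ) * (∑ i, BFS.calNrm X₀ X₁ θ (f i) ^ r) ^ (1 / r) :=
  statement5_general μ X₀ X₁ r hr C₀ C₁ h₀ h₁ θ hθ hθ1 m f hf

end Paper
end
end
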